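/- A vertex in a tournament lies in no directed triangle if and only if reversal of any minimum feedback arc set leaves it with the same in- and out-neighborhood, and deleting such a vertex decreases neither the minimum feedback arc set size nor changes it: fas(T) = fas(T - v) whenever v lies in no directed triangle. -/

import Mathlib

/-!
Restricting a feedback arc set of `T` to `T - v` gives `fas (T - v) ≤ fas T`. Conversely, take an
optimal feedback arc set `F` of `T - v` and rank the vertices of `T`: in-neighbours of `v` first,
then `v`, then its out-neighbours. As `v` lies in no directed triangle, no arc of `T` goes down
this ranking, so every cycle of `T` minus `F` stays within one rank, i.e. inside `T - v`, where
there is none.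
-/

/-- A tournament: irreflexive, and exactly one arc between every pair of distinct vertices. -/
def IsTournament {V : Type*} (r : V → V → Prop) : Prop :=
  (∀ v, ¬ r v v) ∧ ∀ u v : V, u ≠ v → (r u v ↔ ¬ r v u)

/-- A digraph (given by its arc relation) is acyclic: no directed cycle. -/
def Acyclic {V : Type*} (r : V → V → Prop) : Prop :=
  ∀ v, ¬ Relation.TransGen r v v

/-- The minimum size of a feedback arc set of the digraph given by relation `r`. -/
noncomputable def fas {V : Type*} (r : V → V → Prop) : ℕ :=
  sInf {n : ℕ | ∃ F : Finset (V × V), F.card = n ∧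
    Acyclic (fun a b => r a b ∧ (a, b) ∉ F)}

section FeedbackArcSet

variable {V : Type*}

lemma fas_le_card (r : V → V → Prop) (F : Finset (V × V))
    (h : Acyclic (fun a b => r a b ∧ (a, b) ∉ F)) : fas r ≤ F.card :=
  Nat.sInf_le ⟨F, rfl, h⟩

lemma exists_card_eq_fas [Finite V] (r : V → V → Prop) :
    ∃ F : Finset (V × V), F.card = fas r ∧ Acyclic (fun a b => r a b ∧ (a, b) ∉ F) := by
  have := Fintype.ofFinite V
  refine Nat.sInf_mem (s := {n | ∃ F : Finset (V × V), F.card = n ∧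
    Acyclic (fun a b => r a b ∧ (a, b) ∉ F)}) ⟨_, Finset.univ, rfl, fun a h => ?_⟩
  cases h with
  | single h => exact h.2 (Finset.mem_univ _)
  | tail _ h => exact h.2 (Finset.mem_univ _)

lemma fas_comap_le {W : Type*} [Finite V] (r : V → V → Prop) (f : W ↪ V) :
    fas (fun a b => r (f a) (f b)) ≤ fas r := by
  obtain ⟨F, hF, hFac⟩ := exists_card_eq_fas r
  let G := F.preimage (f.prodMap f) (f.prodMap f).injective.injOn
  have hGac : Acyclic (fun a b => r (f a) (f b) ∧ (a, b) ∉ G) := fun a ha =>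
    hFac (f a) <| Relation.TransGen.lift f
      (fun x y hxy => ⟨hxy.1, fun h => hxy.2 (Finset.mem_preimage.mpr h)⟩) a a ha
  calc fas (fun a b => r (f a) (f b)) ≤ G.card := fas_le_card _ G hGac
    _ ≤ F.card := Finset.card_le_card_of_injOn (f.prodMap f)
        (fun _ hp => Finset.mem_preimage.mp hp) (f.prodMap f).injective.injOn
    _ = fas r := hF

lemma acyclic_of_lex_rank {α : Type*} [Preorder α] {q t : V → V → Prop} (g : V → α)
    (ht : ∀ a b c, t a b → t b c → t a c) (ht' : ∀ a, ¬ t a a)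
    (hq : ∀ a b, q a b → g a < g b ∨ (g a = g b ∧ t a b)) : Acyclic q := by
  have hpath : ∀ a b, Relation.TransGen q a b → g a < g b ∨ (g a = g b ∧ t a b) := by
    intro a b hab
    induction hab with
    | single h => exact hq _ _ h
    | tail _ hbc ih =>
      rcases ih, hq _ _ hbc with ⟨h₁ | ⟨e₁, t₁⟩, h₂ | ⟨e₂, t₂⟩⟩
      · exact .inl (h₁.trans h₂)
      · exact .inl (e₂ ▸ h₁)
      · exact .inl (e₁ ▸ h₂)
      · exact .inr ⟨e₁.trans e₂, ht _ _ _ t₁ t₂⟩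
  intro a ha
  rcases hpath a a ha with h | ⟨_, h⟩
  · exact lt_irrefl _ h
  · exact ht' a h

end FeedbackArcSet

namespace IsTournament

variable {V : Type*} {r : V → V → Prop}

open Classical in
noncomputable def rankAround (r : V → V → Prop) (v x : V) : ℕ :=
  if x = v then 1 else if r x v then 0 else 2

lemma rankAround_eq_one_iff {v x : V} : rankAround r v x = 1 ↔ x = v := by
  unfold rankAround
  split_ifs <;> simp_all

lemma rankAround_le_of_rel (hT : IsTournament r) {v : V}
    (hv : ∀ a b : V, ¬ (r v a ∧ r a b ∧ r b v)) {x y : V} (hxy : r x y) :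
    rankAround r v x ≤ rankAround r v y := by
  unfold rankAround
  by_cases hxv : x = v
  · subst hxv
    have : ¬ r y x := (hT.2 x y fun h => hT.1 x (h ▸ hxy)).mp hxy
    split_ifs <;> simp_all
  by_cases hyv : y = v
  · subst hyv
    simp [hxv, hxy]
  have hvy := hT.2 y v hyv
  have hvx := hT.2 x v hxv
  -- an arc from an out-neighbour `x` down to an in-neighbour `y` would close the triangle `v x y`
  have := hv x y
  split_ifs <;> simp_all

lemma ne_of_rel_of_rankAround_eq (hT : IsTournament r) {v x y : V} (hxy : r x y)
    (he : rankAround r v x = rankAround r v y) : x ≠ v ∧ y ≠ v := by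
  have hv : rankAround r v v = 1 := by simp [rankAround]
  have hxy' : x ≠ y := fun h => hT.1 x (h ▸ hxy)
  constructor <;> rintro rfl
  · exact hxy' (rankAround_eq_one_iff.mp (he.symm.trans hv)).symm
  · exact hxy' (rankAround_eq_one_iff.mp (he.trans hv))

lemma fas_le_fas_delete [Finite V] (hT : IsTournament r) {v : V}
    (hv : ∀ a b : V, ¬ (r v a ∧ r a b ∧ r b v)) :
    fas r ≤ fas (fun a b : {x : V // x ≠ v} => r a.1 b.1) := by
  set W := {x : V // x ≠ v}
  obtain ⟨F, hF, hFac⟩ := exists_card_eq_fas (fun a b : W => r a.1 b.1)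
  let e : W × W ↪ V × V := (Function.Embedding.subtype _).prodMap (Function.Embedding.subtype _)
  let t : V → V → Prop := fun x y =>
    ∃ hx hy, Relation.TransGen (fun a b : W => r a.1 b.1 ∧ (a, b) ∉ F) ⟨x, hx⟩ ⟨y, hy⟩
  have ht : ∀ x y z, t x y → t y z → t x z :=
    fun _ _ _ ⟨hx, _, h₁⟩ ⟨_, hz, h₂⟩ => ⟨hx, hz, h₁.trans h₂⟩
  have ht' : ∀ x, ¬ t x x := fun x ⟨hx, _, h⟩ => hFac ⟨x, hx⟩ h
  have hGac : Acyclic (fun a b => r a b ∧ (a, b) ∉ F.map e) := by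
    refine acyclic_of_lex_rank (rankAround r v) ht ht' fun x y ⟨hxy, hnF⟩ => ?_
    refine (rankAround_le_of_rel hT hv hxy).lt_or_eq.imp_right fun he => ?_
    obtain ⟨hx, hy⟩ := ne_of_rel_of_rankAround_eq hT hxy he
    exact ⟨he, hx, hy, .single ⟨hxy, fun h => hnF (Finset.mem_map_of_mem e h)⟩⟩
  calc fas r ≤ (F.map e).card := fas_le_card r _ hGac
    _ = fas (fun a b : W => r a.1 b.1) := (Finset.card_map e).trans hF

end IsTournament

/-- If `v` lies in no directed triangle of a tournament `T`, then
`fas(T) = fas(T - v)`. -/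
theorem stmt18 {V : Type*} [Fintype V] (r : V → V → Prop) (hT : IsTournament r)
    (v : V) (hv : ∀ a b : V, ¬ (r v a ∧ r a b ∧ r b v)) :
    fas r = fas (fun a b : {x : V // x ≠ v} => r a.1 b.1) :=
  le_antisymm (hT.fas_le_fas_delete hv) (fas_comap_le r (Function.Embedding.subtype _))
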